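/- arXiv:2207.06891 — 8 statements merged into one kernel-verified Lean document; each statement's English description precedes it below -/
import Mathlib

section
/- For every integer d ≥ 2, the complex D_d admits no weak Hamiltonian cycle; that is, for every bijection f : ZMod (2d+2) → {0, 1, ..., 2d+1} there exists a vertex w such that w belongs to no window W_i(f) that is a facet of D_d. -/
/-- The `i`-th window of a cyclic arrangement `f : ZMod n → V` in a pure `d`-complex:
the set `{f i, f (i+1), ..., f (i+d)}`. -/
def cycWindow {V : Type*} [DecidableEq V] {n : ℕ} (d : ℕ) (f : ZMod n → V) (i : ZMod n) :
    Finset V :=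
  (Finset.range (d + 1)).image (fun (j : ℕ) => f (i + (j : ZMod n)))

/-- A facet of the complex `D_d` on vertex set `ZMod (2d+2)` (standing for `{0,...,2d+1}`):
a `(d+1)`-element subset containing the vertex `0`. -/
def isFacetD (d : ℕ) (F : Finset (ZMod (2 * d + 2))) : Prop :=
  F.card = d + 1 ∧ (0 : ZMod (2 * d + 2)) ∈ F

/-! Windows have `d + 1` consecutive positions, so two positions `d + 1` apart on a cycle of
length at least `2d + 2` never lie in a common window. In `D_d` every facet contains `0`, so the
vertex placed opposite to `0` lies in no window that is a facet. -/

open Function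

theorem apply_mem_cycWindow_iff {V : Type*} [DecidableEq V] {n d : ℕ} {f : ZMod n → V}
    (hf : Injective f) (i k : ZMod n) :
    f k ∈ cycWindow d f i ↔ ∃ j ≤ d, i + (j : ZMod n) = k := by
  simp only [cycWindow, Finset.mem_image, Finset.mem_range, hf.eq_iff, Nat.lt_succ_iff]

theorem ZMod.natCast_ne_natCast_add_of_le {n d j j' : ℕ} (hn : 2 * d + 1 < n) (hj : j ≤ d)
    (hj' : j' ≤ d) : (j' : ZMod n) ≠ (j : ZMod n) + (d + 1 : ℕ) := by
  rw [← Nat.cast_add, Ne, ZMod.natCast_eq_natCast_iff', Nat.mod_eq_of_lt (by omega),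
    Nat.mod_eq_of_lt (by omega)]
  omega

theorem apply_add_not_mem_cycWindow {V : Type*} [DecidableEq V] {n d : ℕ} (hn : 2 * d + 1 < n)
    {f : ZMod n → V} (hf : Injective f) {i k : ZMod n} (hk : f k ∈ cycWindow d f i) :
    f (k + (d + 1 : ℕ)) ∉ cycWindow d f i := by
  rw [apply_mem_cycWindow_iff hf] at hk ⊢
  rintro ⟨j', hj', hj'k⟩
  obtain ⟨j, hj, rfl⟩ := hk
  rw [add_assoc] at hj'k
  exact ZMod.natCast_ne_natCast_add_of_le hn hj hj' (add_left_cancel hj'k)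

theorem Dd_no_weak_hamiltonian_cycle_general (d : ℕ)
    (f : ZMod (2 * d + 2) → ZMod (2 * d + 2)) (hf : Function.Bijective f) :
    ∃ w : ZMod (2 * d + 2), ∀ i : ZMod (2 * d + 2),
      isFacetD d (cycWindow d f i) → w ∉ cycWindow d f i := by
  obtain ⟨k, hk⟩ := hf.surjective 0
  refine ⟨f (k + (d + 1 : ℕ)), fun i ⟨_, h0⟩ => ?_⟩
  rw [← hk] at h0
  exact apply_add_not_mem_cycWindow (by omega) hf.injective h0

/-- For every `d ≥ 2`, the complex `D_d` admits no weak Hamiltonian cycle: for every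
bijection `f : ZMod (2d+2) → {0,...,2d+1}` there is a vertex `w` belonging to no window
`W_i(f)` that is a facet of `D_d`. -/
theorem Dd_no_weak_hamiltonian_cycle (d : ℕ) (hd : 2 ≤ d)
    (f : ZMod (2 * d + 2) → ZMod (2 * d + 2)) (hf : Function.Bijective f) :
    ∃ w : ZMod (2 * d + 2), ∀ i : ZMod (2 * d + 2),
      isFacetD d (cycWindow d f i) → w ∉ cycWindow d f i :=
  Dd_no_weak_hamiltonian_cycle_general d f hf
end

section
/- For every integer d ≥ 2, the complex D_d admits no weak Hamiltonian path; that is, for every bijection g : Fin (2d+2) → {0, 1, ..., 2d+1} there exists a vertex w that belongs to no window {g(i), g(i+1), ..., g(i+d)} (with i + d ≤ 2d+1) that is a facet of D_d. -/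
/-- The window `{g i, g (i+1), ..., g (i+d)}` of a linear arrangement `g : Fin n → V`,
starting at position `i : ℕ`. -/
def pathWindow {V : Type*} [DecidableEq V] {n : ℕ} (d : ℕ) (g : Fin n → V) (i : ℕ) :
    Finset V :=
  (Finset.univ.filter (fun k : Fin n => i ≤ (k : ℕ) ∧ (k : ℕ) ≤ i + d)).image g

/-! Every facet of `D_d` contains `0`, and a window has length `d + 1`, so a vertex placed at
distance `d + 1` from the position of `0` never shares a facet-window with it. Since the path
has `2d + 2` positions, such a position exists on one side of `0` or the other. -/

section PathWindow

variable {V : Type*} [DecidableEq V] {n : ℕ} {d : ℕ} {g : Fin n → V}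

theorem Function.Injective.apply_mem_pathWindow_iff (hg : g.Injective) (k : Fin n) (i : ℕ) :
    g k ∈ pathWindow d g i ↔ i ≤ (k : ℕ) ∧ (k : ℕ) ≤ i + d := by
  simp [pathWindow, hg.eq_iff]

theorem Function.Injective.le_add_of_apply_mem_pathWindow (hg : g.Injective) {k k' : Fin n}
    {i : ℕ} (hk : g k ∈ pathWindow d g i) (hk' : g k' ∈ pathWindow d g i) :
    (k : ℕ) ≤ k' + d := by
  rw [hg.apply_mem_pathWindow_iff] at hk hk'
  omega

theorem exists_far_position (p : Fin (2 * d + 2)) :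
    ∃ q : Fin (2 * d + 2), (p : ℕ) + d < q ∨ (q : ℕ) + d < p := by
  by_cases hp : (p : ℕ) ≤ d
  · exact ⟨⟨p + d + 1, by omega⟩, Or.inl (by dsimp only; omega)⟩
  · exact ⟨⟨p - (d + 1), by omega⟩, Or.inr (by dsimp only; omega)⟩

theorem Function.Injective.exists_forall_not_mem_pathWindow_of_apply_mem
    {g : Fin (2 * d + 2) → V} (hg : g.Injective) (p : Fin (2 * d + 2)) :
    ∃ w : V, ∀ i : ℕ, g p ∈ pathWindow d g i → w ∉ pathWindow d g i := by
  obtain ⟨q, hq⟩ := exists_far_position p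
  refine ⟨g q, fun i hp hq' => ?_⟩
  have := hg.le_add_of_apply_mem_pathWindow hp hq'
  have := hg.le_add_of_apply_mem_pathWindow hq' hp
  omega

end PathWindow

theorem Dd_no_weak_hamiltonian_path_general (d : ℕ)
    (g : Fin (2 * d + 2) → ZMod (2 * d + 2)) (hg : Function.Bijective g) :
    ∃ w : ZMod (2 * d + 2), ∀ i : ℕ, i + d ≤ 2 * d + 1 →
      isFacetD d (pathWindow d g i) → w ∉ pathWindow d g i := by
  obtain ⟨p, hp⟩ := hg.surjective 0
  obtain ⟨w, hw⟩ := hg.injective.exists_forall_not_mem_pathWindow_of_apply_mem (d := d) p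
  exact ⟨w, fun i _ hF => hw i (hp ▸ hF.2)⟩

/-- For every `d ≥ 2`, the complex `D_d` admits no weak Hamiltonian path: for every
bijection `g : Fin (2d+2) → {0,...,2d+1}` there is a vertex `w` belonging to no window
`{g i, ..., g (i+d)}` (with `i + d ≤ 2d+1`) that is a facet of `D_d`. -/
theorem Dd_no_weak_hamiltonian_path (d : ℕ) (hd : 2 ≤ d)
    (g : Fin (2 * d + 2) → ZMod (2 * d + 2)) (hg : Function.Bijective g) :
    ∃ w : ZMod (2 * d + 2), ∀ i : ℕ, i + d ≤ 2 * d + 1 →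
      isFacetD d (pathWindow d g i) → w ∉ pathWindow d g i :=
  Dd_no_weak_hamiltonian_path_general d g hg
end

section
/- For every integer d ≥ 2, the complex W^d admits no weak Hamiltonian path; that is, for every bijection g : Fin (d+3) → {1, ..., d+3} there exists a vertex w that belongs to no window {g(i), g(i+1), ..., g(i+d)} (with i + d ≤ d+2) that is a facet of W^d. -/
/-- A facet of the complex `W^d` on vertex set `{1,...,d+3} ⊆ ℕ`: one of the three sets
`{1,...,d} ∪ {d+1}`, `{1,...,d} ∪ {d+2}`, `{1,...,d} ∪ {d+3}`. -/
def isFacetW (d : ℕ) (F : Finset ℕ) : Prop :=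
  F = insert (d + 1) (Finset.Icc 1 d) ∨ F = insert (d + 2) (Finset.Icc 1 d) ∨
    F = insert (d + 3) (Finset.Icc 1 d)

/-!
Only the windows starting at positions `0, 1, 2` fit, and every facet of `W^d` contains
`{1, …, d}`. The windows at `0` and `2` share only `d - 1` positions, so by injectivity they
cannot both be facets. Hence at most two windows are facets, each containing exactly one of
the apexes `d + 1, d + 2, d + 3`, and the third apex is covered by no facet window.
-/

open Finset

section pathWindow

variable {V : Type*} [DecidableEq V] {n : ℕ}

theorem mem_pathWindow {d : ℕ} {g : Fin n → V} {i : ℕ} {x : V} :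
    x ∈ pathWindow d g i ↔ ∃ k : Fin n, i ≤ (k : ℕ) ∧ (k : ℕ) ≤ i + d ∧ g k = x := by
  simp only [pathWindow, mem_image, mem_filter, mem_univ, true_and, and_assoc]

theorem card_pathWindow_le (d : ℕ) (g : Fin n → V) (i : ℕ) : #(pathWindow d g i) ≤ d + 1 := by
  calc #(pathWindow d g i)
      ≤ #(univ.filter fun k : Fin n => i ≤ (k : ℕ) ∧ (k : ℕ) ≤ i + d) := card_image_le
    _ = #((univ.filter fun k : Fin n => i ≤ (k : ℕ) ∧ (k : ℕ) ≤ i + d).map Fin.valEmbedding) :=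
        (card_map _).symm
    _ ≤ #(Icc i (i + d)) := card_le_card fun x hx => by
        obtain ⟨k, hk, rfl⟩ := mem_map.mp hx
        simpa using (mem_filter.mp hk).2
    _ = d + 1 := by rw [Nat.card_Icc]; omega

theorem pathWindow_inter_subset {g : Fin n → V} (hg : Function.Injective g) {d e : ℕ}
    (he : e ≤ d) (i : ℕ) :
    pathWindow d g i ∩ pathWindow d g (i + e) ⊆ pathWindow (d - e) g (i + e) := by
  intro x hx
  obtain ⟨hx₁, hx₂⟩ := mem_inter.mp hx
  obtain ⟨k, -, hk, rfl⟩ := mem_pathWindow.mp hx₁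
  obtain ⟨k', hk', -, hkk'⟩ := mem_pathWindow.mp hx₂
  obtain rfl : k' = k := hg hkk'
  exact mem_pathWindow.mpr ⟨k', hk', by omega, rfl⟩

theorem card_pathWindow_inter_le {g : Fin n → V} (hg : Function.Injective g) {d e : ℕ}
    (he : e ≤ d) (i : ℕ) :
    #(pathWindow d g i ∩ pathWindow d g (i + e)) ≤ d - e + 1 :=
  (card_le_card (pathWindow_inter_subset hg he i)).trans (card_pathWindow_le _ _ _)

end pathWindow

section isFacetW

variable {d : ℕ} {F : Finset ℕ}

theorem isFacetW.exists_eq_insert (hF : isFacetW d F) :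
    ∃ a ∈ Icc (d + 1) (d + 3), F = insert a (Icc 1 d) := by
  rcases hF with rfl | rfl | rfl
  exacts [⟨d + 1, by simp, rfl⟩, ⟨d + 2, by simp, rfl⟩, ⟨d + 3, by simp, rfl⟩]

theorem isFacetW.Icc_subset (hF : isFacetW d F) : Icc 1 d ⊆ F := by
  obtain ⟨a, -, rfl⟩ := hF.exists_eq_insert
  exact subset_insert _ _

theorem exists_apex_notMem_of_isFacetW (d : ℕ) (F G : Finset ℕ) :
    ∃ c ∈ Icc (d + 1) (d + 3), (isFacetW d F → c ∉ F) ∧ (isFacetW d G → c ∉ G) := by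
  have apex : ∀ H : Finset ℕ, ∃ a, isFacetW d H → H = insert a (Icc 1 d) := fun H => by
    by_cases hH : isFacetW d H
    · obtain ⟨a, -, rfl⟩ := hH.exists_eq_insert
      exact ⟨a, fun _ => rfl⟩
    · exact ⟨0, fun h => absurd h hH⟩
  obtain ⟨a, ha⟩ := apex F
  obtain ⟨b, hb⟩ := apex G
  have hcard : #({a, b} : Finset ℕ) < #(Icc (d + 1) (d + 3)) := by
    simpa using card_le_two.trans_lt (by norm_num : 2 < 3)
  obtain ⟨c, hc, hcab⟩ := exists_mem_notMem_of_card_lt_card hcard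
  have hcd : d < c := (mem_Icc.mp hc).1
  simp only [mem_insert, mem_singleton, not_or] at hcab
  refine ⟨c, hc, fun hF => ?_, fun hG => ?_⟩
  · rw [ha hF]; simp only [mem_insert, mem_Icc]; omega
  · rw [hb hG]; simp only [mem_insert, mem_Icc]; omega

end isFacetW

theorem not_isFacetW_pathWindow_and_add_two {d : ℕ} (hd : 2 ≤ d) {n : ℕ} {g : Fin n → ℕ}
    (hg : Function.Injective g) (i : ℕ) (hi : isFacetW d (pathWindow d g i))
    (hi₂ : isFacetW d (pathWindow d g (i + 2))) : False := by
  have hsub : Icc 1 d ⊆ pathWindow d g i ∩ pathWindow d g (i + 2) :=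
    subset_inter hi.Icc_subset hi₂.Icc_subset
  have := (card_le_card hsub).trans (card_pathWindow_inter_le hg hd i)
  rw [Nat.card_Icc] at this
  omega

theorem Wd_no_weak_hamiltonian_path_general (d : ℕ) (hd : 2 ≤ d) (g : Fin (d + 3) → ℕ)
    (hinj : Function.Injective g) :
    ∃ w ∈ Finset.Icc 1 (d + 3), ∀ i : ℕ, i + d ≤ d + 2 →
      isFacetW d (pathWindow d g i) → w ∉ pathWindow d g i := by
  obtain ⟨j, hj⟩ : ∃ j, ∀ i ≤ 2, isFacetW d (pathWindow d g i) → i = j ∨ i = j + 1 := by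
    by_cases h₀ : isFacetW d (pathWindow d g 0)
    · refine ⟨0, fun i hi hFi => ?_⟩
      interval_cases i
      · exact Or.inl rfl
      · exact Or.inr rfl
      · exact (not_isFacetW_pathWindow_and_add_two hd hinj 0 h₀ hFi).elim
    · refine ⟨1, fun i hi hFi => ?_⟩
      interval_cases i
      · exact absurd hFi h₀
      · exact Or.inl rfl
      · exact Or.inr rfl
  obtain ⟨c, hc, hcj, hcj₁⟩ :=
    exists_apex_notMem_of_isFacetW d (pathWindow d g j) (pathWindow d g (j + 1))
  refine ⟨c, Icc_subset_Icc (by omega) le_rfl hc, fun i hi hFi => ?_⟩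
  rcases hj i (by omega) hFi with rfl | rfl
  exacts [hcj hFi, hcj₁ hFi]

/-- For every `d ≥ 2`, the complex `W^d` admits no weak Hamiltonian path: for every
bijection `g : Fin (d+3) → {1,...,d+3}` there is a vertex `w` belonging to no window
`{g i, ..., g (i+d)}` (with `i + d ≤ d+2`) that is a facet of `W^d`. -/
theorem Wd_no_weak_hamiltonian_path (d : ℕ) (hd : 2 ≤ d) (g : Fin (d + 3) → ℕ)
    (hinj : Function.Injective g) (hmem : ∀ k, g k ∈ Finset.Icc 1 (d + 3))
    (hsurj : ∀ v ∈ Finset.Icc 1 (d + 3), ∃ k, g k = v) :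
    ∃ w ∈ Finset.Icc 1 (d + 3), ∀ i : ℕ, i + d ≤ d + 2 →
      isFacetW d (pathWindow d g i) → w ∉ pathWindow d g i :=
  Wd_no_weak_hamiltonian_path_general d hd g hinj
end

section
/- For every integer d ≥ 2, the complex W^d admits no weak Hamiltonian cycle; that is, for every bijection f : ZMod (d+3) → {1, ..., d+3} there exists a vertex w that belongs to no window W_i(f) that is a facet of W^d. -/
def CyclicAdj {R : Type*} [Add R] [One R] (p q : R) : Prop :=
  q = p + 1 ∨ p = q + 1

theorem not_cyclicAdj_triangle {R : Type*} [CommRing R] (h3 : (3 : R) ≠ 0) {a b c : R}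
    (hab : CyclicAdj a b) (hbc : CyclicAdj b c) (hac : CyclicAdj a c) : False := by
  unfold CyclicAdj at hab hbc hac
  rcases hab with hab | hab <;> rcases hbc with hbc | hbc <;> rcases hac with hac | hac <;>
    apply h3 <;> grind

theorem ZMod.three_ne_zero_of_lt {n : ℕ} (hn : 3 < n) : (3 : ZMod n) ≠ 0 := by
  rw [show (3 : ZMod n) = ((3 : ℕ) : ZMod n) by norm_cast, Ne, ZMod.natCast_eq_zero_iff]
  exact fun h => absurd (Nat.le_of_dvd three_pos h) (by omega)

theorem mem_cycWindow_or {V : Type*} [DecidableEq V] {d : ℕ} (f : ZMod (d + 3) → V)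
    (i x : ZMod (d + 3)) : f x ∈ cycWindow d f i ∨ x = i - 2 ∨ x = i - 1 := by
  set j := (x - i).val
  have hx : x = i + (j : ZMod (d + 3)) := by simp [j]
  have hd3 : ((d + 3 : ℕ) : ZMod (d + 3)) = 0 := ZMod.natCast_self _
  have hj : j < d + 3 := ZMod.val_lt _
  by_cases hjd : j < d + 1
  · exact Or.inl (Finset.mem_image.2 ⟨j, Finset.mem_range.2 hjd, congrArg f hx.symm⟩)
  · right
    obtain hj1 | hj2 : j = d + 1 ∨ j = d + 2 := by omega
    · left; rw [hx, hj1]; push_cast at hd3 ⊢; linear_combination hd3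
    · right; rw [hx, hj2]; push_cast at hd3 ⊢; linear_combination hd3

theorem cyclicAdj_of_notMem_cycWindow {V : Type*} [DecidableEq V] {d : ℕ}
    {f : ZMod (d + 3) → V} {i p q : ZMod (d + 3)} (hpq : p ≠ q)
    (hp : f p ∉ cycWindow d f i) (hq : f q ∉ cycWindow d f i) : CyclicAdj p q := by
  rcases (mem_cycWindow_or f i p).resolve_left hp with rfl | rfl <;>
    rcases (mem_cycWindow_or f i q).resolve_left hq with rfl | rfl
  · exact absurd rfl hpq
  · left; ring
  · right; ring
  · exact absurd rfl hpq

theorem isFacetW.eq_of_mem {d : ℕ} {F : Finset ℕ} (hF : isFacetW d F) {s t : ℕ}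
    (hs : d < s) (ht : d < t) (hsF : s ∈ F) (htF : t ∈ F) : s = t := by
  rcases hF with rfl | rfl | rfl <;>
    simp only [Finset.mem_insert, Finset.mem_Icc] at hsF htF <;> omega

theorem cyclicAdj_of_mem_facet_cycWindow {d : ℕ} {f : ZMod (d + 3) → ℕ} {i p q : ZMod (d + 3)}
    (hi : isFacetW d (cycWindow d f i)) {t : ℕ} (ht : d < t) (hti : t ∈ cycWindow d f i)
    (hp : d < f p) (hq : d < f q) (hpt : f p ≠ t) (hqt : f q ≠ t) (hpq : f p ≠ f q) :
    CyclicAdj p q :=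
  cyclicAdj_of_notMem_cycWindow (fun h => hpq (congrArg f h))
    (fun h => hpt (hi.eq_of_mem hp ht h hti)) (fun h => hqt (hi.eq_of_mem hq ht h hti))

theorem Wd_no_weak_hamiltonian_cycle_general (d : ℕ) (hd : 2 ≤ d) (f : ZMod (d + 3) → ℕ)
    (hsurj : ∀ v ∈ Finset.Icc 1 (d + 3), ∃ i, f i = v) :
    ∃ w ∈ Finset.Icc 1 (d + 3), ∀ i : ZMod (d + 3),
      isFacetW d (cycWindow d f i) → w ∉ cycWindow d f i := by
  by_contra! hcover
  have apex : ∀ k, 1 ≤ k → k ≤ 3 → d + k ∈ Finset.Icc 1 (d + 3) := fun k h1 h3 =>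
    Finset.mem_Icc.2 ⟨by omega, by omega⟩
  obtain ⟨a, ha⟩ := hsurj _ (apex 1 le_rfl (by omega))
  obtain ⟨b, hb⟩ := hsurj _ (apex 2 (by omega) (by omega))
  obtain ⟨c, hc⟩ := hsurj _ (apex 3 (by omega) le_rfl)
  obtain ⟨i₁, hi₁, h₁⟩ := hcover _ (apex 1 le_rfl (by omega))
  obtain ⟨i₂, hi₂, h₂⟩ := hcover _ (apex 2 (by omega) (by omega))
  obtain ⟨i₃, hi₃, h₃⟩ := hcover _ (apex 3 (by omega) le_rfl)
  have hab := cyclicAdj_of_mem_facet_cycWindow (p := a) (q := b) hi₃ (by omega) h₃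
    (by omega) (by omega) (by omega) (by omega) (by omega)
  have hbc := cyclicAdj_of_mem_facet_cycWindow (p := b) (q := c) hi₁ (by omega) h₁
    (by omega) (by omega) (by omega) (by omega) (by omega)
  have hac := cyclicAdj_of_mem_facet_cycWindow (p := a) (q := c) hi₂ (by omega) h₂
    (by omega) (by omega) (by omega) (by omega) (by omega)
  exact not_cyclicAdj_triangle (ZMod.three_ne_zero_of_lt (by omega)) hab hbc hac

/-- For every `d ≥ 2`, the complex `W^d` admits no weak Hamiltonian cycle: for every
bijection `f : ZMod (d+3) → {1,...,d+3}` there is a vertex `w` belonging to no window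
`W_i(f)` that is a facet of `W^d`. -/
theorem Wd_no_weak_hamiltonian_cycle (d : ℕ) (hd : 2 ≤ d) (f : ZMod (d + 3) → ℕ)
    (hinj : Function.Injective f) (hmem : ∀ i, f i ∈ Finset.Icc 1 (d + 3))
    (hsurj : ∀ v ∈ Finset.Icc 1 (d + 3), ∃ i, f i = v) :
    ∃ w ∈ Finset.Icc 1 (d + 3), ∀ i : ZMod (d + 3),
      isFacetW d (cycWindow d f i) → w ∉ cycWindow d f i :=
  Wd_no_weak_hamiltonian_cycle_general d hd f hsurj
end

section
/- For every integer d ≥ 2, the complex W^d is maximally non-weakly-Hamiltonian: for every (d+1)-element subset F of {1, ..., d+3} that is not a facet of W^d, the pure d-complex whose facet set is that of W^d together with F admits a weak Hamiltonian cycle. -/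
section ListArrangement

variable {V : Type*} [Inhabited V] {n : ℕ} {L : List V}

/-- Intended for `L.length = n`; otherwise positions are lost or padded with `default`. -/
def listArrangement (n : ℕ) (L : List V) : ZMod n → V := fun i => L.getD i.val default

theorem listArrangement_natCast {k : ℕ} (hk : k < n) :
    listArrangement n L k = L.getD k default := by
  rw [listArrangement, ZMod.val_natCast_of_lt hk]

theorem exists_listArrangement_eq (hlen : L.length = n) {v : V} (hv : v ∈ L) :
    ∃ i, listArrangement n L i = v := by
  obtain ⟨k, hk, rfl⟩ := List.mem_iff_getElem.mp hv
  exact ⟨k, by rw [listArrangement_natCast (hlen ▸ hk), List.getD_eq_getElem _ _ hk]⟩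

theorem cycWindow_listArrangement [DecidableEq V] (hlen : L.length = n) {d k : ℕ}
    (hk : k + d < n) :
    cycWindow d (listArrangement n L) k = ((L.drop k).take (d + 1)).toFinset := by
  ext v
  simp only [cycWindow, Finset.mem_image, Finset.mem_range, List.mem_toFinset,
    List.mem_iff_getElem, List.length_take, List.length_drop, List.getElem_take,
    List.getElem_drop]
  constructor
  · rintro ⟨j, hj, rfl⟩
    refine ⟨j, by omega, ?_⟩
    rw [← Nat.cast_add, listArrangement_natCast (by omega), List.getD_eq_getElem]
  · rintro ⟨j, hj, rfl⟩
    refine ⟨j, by omega, ?_⟩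
    rw [← Nat.cast_add, listArrangement_natCast (by omega), List.getD_eq_getElem]

variable [NeZero n]

theorem listArrangement_injective (hL : L.Nodup) (hlen : L.length = n) :
    Function.Injective (listArrangement n L) := by
  intro i j hij
  have hi : i.val < L.length := hlen ▸ ZMod.val_lt i
  have hj : j.val < L.length := hlen ▸ ZMod.val_lt j
  simp only [listArrangement, List.getD_eq_getElem _ _ hi, List.getD_eq_getElem _ _ hj] at hij
  exact ZMod.val_injective n (hL.getElem_inj_iff.mp hij)

theorem listArrangement_mem (hlen : L.length = n) (i : ZMod n) : listArrangement n L i ∈ L := by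
  have hi : i.val < L.length := hlen ▸ ZMod.val_lt i
  rw [listArrangement, List.getD_eq_getElem _ _ hi]
  exact List.getElem_mem hi

end ListArrangement

namespace List

variable {α : Type*} [DecidableEq α] {l₁ l₂ : List α}

theorem toFinset_append_sdiff_right (h : (l₁ ++ l₂).Nodup) :
    (l₁ ++ l₂).toFinset \ l₂.toFinset = l₁.toFinset := by
  rw [toFinset_append, Finset.union_sdiff_cancel_right
    (disjoint_toFinset_iff_disjoint.mpr (disjoint_of_nodup_append h))]

theorem toFinset_append_sdiff_left (h : (l₁ ++ l₂).Nodup) :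
    (l₁ ++ l₂).toFinset \ l₁.toFinset = l₂.toFinset := by
  rw [toFinset_append, Finset.union_sdiff_cancel_left
    (disjoint_toFinset_iff_disjoint.mpr (disjoint_of_nodup_append h))]

end List

theorem exists_nodup_append_append_toFinset_eq {α : Type*} [DecidableEq α] {S : Finset α}
    {p q : List α} (hpq : (p ++ q).Nodup) (hS : (p ++ q).toFinset ⊆ S) :
    ∃ m : List α, (p ++ m ++ q).Nodup ∧ (p ++ m ++ q).toFinset = S := by
  refine ⟨(S \ (p ++ q).toFinset).toList, ?_, ?_⟩
  · simp only [List.nodup_append, Finset.mem_toList, Finset.mem_sdiff, List.mem_toFinset,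
      List.mem_append] at hpq ⊢
    refine ⟨⟨hpq.1, Finset.nodup_toList _, ?_⟩, hpq.2.1, ?_⟩
    · rintro a ha b ⟨-, hb⟩ rfl
      exact hb (Or.inl ha)
    · rintro a (ha | ⟨-, ha⟩) b hb rfl
      · exact hpq.2.2 a ha a hb rfl
      · exact ha (Or.inr hb)
  · ext v
    have hvS := @hS v
    simp only [List.toFinset_append, List.mem_toFinset, Finset.mem_union, Finset.mem_toList,
      Finset.mem_sdiff] at hvS ⊢
    tauto

section FacetsOfW

variable {d x y : ℕ}

/-- `3 * d + 6 - x - y` is the third apex. -/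
theorem Icc_sdiff_pair_eq (hx : x ∈ Finset.Icc (d + 1) (d + 3))
    (hy : y ∈ Finset.Icc (d + 1) (d + 3)) (hxy : x ≠ y) :
    Finset.Icc 1 (d + 3) \ {x, y} = insert (3 * d + 6 - x - y) (Finset.Icc 1 d) := by
  rw [Finset.mem_Icc] at hx hy
  ext v
  simp only [Finset.mem_sdiff, Finset.mem_Icc, Finset.mem_insert, Finset.mem_singleton]
  omega

theorem isFacetW_Icc_sdiff_pair (hx : x ∈ Finset.Icc (d + 1) (d + 3))
    (hy : y ∈ Finset.Icc (d + 1) (d + 3)) (hxy : x ≠ y) :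
    isFacetW d (Finset.Icc 1 (d + 3) \ {x, y}) := by
  rw [Icc_sdiff_pair_eq hx hy hxy, isFacetW]
  rw [Finset.mem_Icc] at hx hy
  obtain h | h | h : 3 * d + 6 - x - y = d + 1 ∨ 3 * d + 6 - x - y = d + 2 ∨
      3 * d + 6 - x - y = d + 3 := by omega
  all_goals rw [h]; simp

theorem exists_apex_pair_disjoint {G : Finset ℕ} (hGsub : G ⊆ Finset.Icc 1 (d + 3))
    (hGcard : G.card = 2) (hG : ¬ isFacetW d (Finset.Icc 1 (d + 3) \ G)) :
    ∃ x y, x ∈ Finset.Icc (d + 1) (d + 3) ∧ y ∈ Finset.Icc (d + 1) (d + 3) ∧ x ≠ y ∧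
      x ∉ G ∧ y ∉ G := by
  by_cases hfree : 1 < (Finset.Icc (d + 1) (d + 3) \ G).card
  · obtain ⟨x, hx, y, hy, hxy⟩ := Finset.one_lt_card.mp hfree
    rw [Finset.mem_sdiff] at hx hy
    exact ⟨x, y, hx.1, hy.1, hxy, hx.2, hy.2⟩
  · have hGapex : G ⊆ Finset.Icc (d + 1) (d + 3) := by
      have hcard := Finset.card_sdiff_add_card_inter (Finset.Icc (d + 1) (d + 3)) G
      simp only [Nat.card_Icc] at hcard
      have hinter : Finset.Icc (d + 1) (d + 3) ∩ G = G :=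
        Finset.eq_of_subset_of_card_le Finset.inter_subset_right (by omega)
      exact hinter ▸ Finset.inter_subset_left
    obtain ⟨a, b, hab, rfl⟩ := Finset.card_eq_two.mp hGcard
    exact absurd (isFacetW_Icc_sdiff_pair (hGapex (by simp)) (hGapex (by simp)) hab) hG

end FacetsOfW

/-- The arrangement is `p`, then the rest of `S`, then `q`. -/
theorem exists_arrangement_cycWindow_eq_sdiff {V : Type*} [DecidableEq V] [Inhabited V]
    {S : Finset V} {n d : ℕ} (hS : S.card = n) {p q : List V} (hpq : (p ++ q).Nodup)
    (hsub : (p ++ q).toFinset ⊆ S) (hp : p.length + d + 1 = n) (hq : q.length = p.length) :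
    ∃ f : ZMod n → V, Function.Injective f ∧ (∀ i, f i ∈ S) ∧ (∀ v ∈ S, ∃ i, f i = v) ∧
      cycWindow d f 0 = S \ q.toFinset ∧ cycWindow d f p.length = S \ p.toFinset := by
  obtain ⟨m, hnd, hset⟩ := exists_nodup_append_append_toFinset_eq hpq hsub
  have hlen : (p ++ m ++ q).length = n := by rw [← List.toFinset_card_of_nodup hnd, hset, hS]
  have hmq : (m ++ q).length = d + 1 := by simp only [List.length_append] at hlen ⊢; omega
  have : NeZero n := ⟨by omega⟩
  refine ⟨listArrangement n (p ++ m ++ q), listArrangement_injective hnd hlen,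
    fun i => hset ▸ List.mem_toFinset.mpr (listArrangement_mem hlen i),
    fun v hv => exists_listArrangement_eq hlen (List.mem_toFinset.mp (hset ▸ hv)), ?_, ?_⟩
  · rw [← Nat.cast_zero, cycWindow_listArrangement hlen (by omega), List.drop_zero,
      List.take_left' (by simp only [List.length_append] at hmq ⊢; omega), ← hset,
      List.toFinset_append_sdiff_right hnd]
  · rw [cycWindow_listArrangement hlen (by omega), List.append_assoc, List.drop_left' rfl,
      List.take_of_length_le hmq.le, ← hset, List.append_assoc,
      List.toFinset_append_sdiff_left (List.append_assoc p m q ▸ hnd)]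

theorem Wd_maximally_non_weakly_hamiltonian_general (d : ℕ) (F : Finset ℕ)
    (hFsub : F ⊆ Finset.Icc 1 (d + 3)) (hFcard : F.card = d + 1) (hF : ¬ isFacetW d F) :
    ∃ f : ZMod (d + 3) → ℕ, Function.Injective f ∧ (∀ i, f i ∈ Finset.Icc 1 (d + 3)) ∧
      (∀ v ∈ Finset.Icc 1 (d + 3), ∃ i, f i = v) ∧
      ∀ v ∈ Finset.Icc 1 (d + 3), ∃ i : ZMod (d + 3),
        (isFacetW d (cycWindow d f i) ∨ cycWindow d f i = F) ∧ v ∈ cycWindow d f i := by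
  set S := Finset.Icc 1 (d + 3)
  have hFF : S \ (S \ F) = F := Finset.sdiff_sdiff_eq_self hFsub
  have hGcard : (S \ F).card = 2 := by
    rw [Finset.card_sdiff_of_subset hFsub, hFcard, Nat.card_Icc]; omega
  obtain ⟨x, y, hx, hy, hxy, hxG, hyG⟩ :=
    exists_apex_pair_disjoint Finset.sdiff_subset hGcard (by rwa [hFF])
  obtain ⟨a, b, hab, hGab⟩ := Finset.card_eq_two.mp hGcard
  have habS : {a, b} ⊆ S := hGab ▸ Finset.sdiff_subset
  have hapexS : Finset.Icc (d + 1) (d + 3) ⊆ S := Finset.Icc_subset_Icc (by omega) le_rfl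
  rw [hGab, Finset.mem_insert, Finset.mem_singleton, not_or] at hxG hyG
  obtain ⟨f, hinj, hmem, hsurj, hwF, hwFacet⟩ :=
    exists_arrangement_cycWindow_eq_sdiff (S := S) (p := [x, y]) (q := [a, b]) (d := d)
      (Nat.card_Icc 1 (d + 3)) (by simp [hxy, hab, hxG, hyG])
      (by simp [Finset.insert_subset_iff, hapexS hx, hapexS hy, Finset.insert_subset_iff.mp habS])
      (by simp only [List.length_cons, List.length_nil]; omega) rfl
  simp only [List.toFinset_cons, List.toFinset_nil, insert_empty_eq, ← hGab, hFF] at hwF hwFacet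
  refine ⟨f, hinj, hmem, hsurj, fun v hv => ?_⟩
  by_cases hvF : v ∈ F
  · exact ⟨0, Or.inr hwF, hwF ▸ hvF⟩
  · refine ⟨_, Or.inl (hwFacet ▸ isFacetW_Icc_sdiff_pair hx hy hxy),
      hwFacet ▸ Finset.mem_sdiff.mpr ⟨hv, ?_⟩⟩
    have hvG : v ∈ ({a, b} : Finset ℕ) := hGab ▸ Finset.mem_sdiff.mpr ⟨hv, hvF⟩
    simp only [Finset.mem_insert, Finset.mem_singleton] at hvG ⊢
    omega

/-- For every `d ≥ 2`, the complex `W^d` is maximally non-weakly-Hamiltonian: adding any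
`(d+1)`-element subset `F` of `{1,...,d+3}` that is not already a facet of `W^d` produces
a complex admitting a weak Hamiltonian cycle, i.e. there is a bijection
`f : ZMod (d+3) → {1,...,d+3}` such that every vertex lies in some window that is a facet
of `W^d ∪ {F}`. -/
theorem Wd_maximally_non_weakly_hamiltonian (d : ℕ) (hd : 2 ≤ d) (F : Finset ℕ)
    (hFsub : F ⊆ Finset.Icc 1 (d + 3)) (hFcard : F.card = d + 1) (hF : ¬ isFacetW d F) :
    ∃ f : ZMod (d + 3) → ℕ, Function.Injective f ∧ (∀ i, f i ∈ Finset.Icc 1 (d + 3)) ∧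
      (∀ v ∈ Finset.Icc 1 (d + 3), ∃ i, f i = v) ∧
      ∀ v ∈ Finset.Icc 1 (d + 3), ∃ i : ZMod (d + 3),
        (isFacetW d (cycWindow d f i) ∨ cycWindow d f i = F) ∧ v ∈ cycWindow d f i :=
  Wd_maximally_non_weakly_hamiltonian_general d F hFsub hFcard hF
end

section
/- For every 3-element subset F of {0, 1, ..., 5} with 0 ∉ F (i.e., F not a facet of D_2), the pure 2-complex whose facet set is that of D_2 together with F admits a weak Hamiltonian cycle. -/
/-- A facet of the complex `D_2` on vertex set `Fin 6` (standing for `{0,...,5}`):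
a `3`-element subset containing the vertex `0`. -/
def isFacetD2 (F : Finset (Fin 6)) : Prop :=
  F.card = 3 ∧ (0 : Fin 6) ∈ F

/-!
Write `F = {a, b, c}`. Its complement `{0, x, y}` contains `0`, so it is a facet of `D_2`.
Placing `a, b, c, 0, x, y` around the 6-cycle makes the windows at positions `0` and `3`
exactly `F` and its complement: two facets that together contain every vertex.
-/

variable {V : Type*}

def IsWeakHamiltonianCycle [DecidableEq V] {n : ℕ} (IsFacet : Finset V → Prop) (d : ℕ)
    (f : ZMod n → V) : Prop :=
  Function.Bijective f ∧ ∀ v, ∃ i, IsFacet (cycWindow d f i) ∧ v ∈ cycWindow d f i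

theorem mem_cycWindow [DecidableEq V] {n d : ℕ} {f : ZMod n → V} {i : ZMod n} {v : V} :
    v ∈ cycWindow d f i ↔ ∃ j < d + 1, f (i + j) = v := by
  simp [cycWindow]

section BlockArrangement

variable {d : ℕ} (e : Fin (d + 1) ⊕ Fin (d + 1) ≃ V)

def blockArrangement (i : ZMod ((d + 1) + (d + 1))) : V :=
  e (finSumFinEquiv.symm ⟨i.val, ZMod.val_lt i⟩)

theorem bijective_blockArrangement : Function.Bijective (blockArrangement e) := by
  have hval :
      Function.Bijective fun i : ZMod ((d + 1) + (d + 1)) => (⟨i.val, i.val_lt⟩ : Fin _) :=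
    ⟨fun i i' h => ZMod.val_injective _ (Fin.mk.inj h),
      fun k => ⟨k.val, Fin.ext (ZMod.val_cast_of_lt k.isLt)⟩⟩
  exact (e.bijective.comp finSumFinEquiv.symm.bijective).comp hval

theorem blockArrangement_natCast {j : ℕ} (hj : j < d + 1) :
    blockArrangement e j = e (.inl ⟨j, hj⟩) := by
  rw [blockArrangement, ← finSumFinEquiv_symm_apply_castAdd]
  congr 2
  ext
  simp only [Fin.val_castAdd]
  exact ZMod.val_cast_of_lt (n := (d + 1) + (d + 1)) (by omega)

theorem blockArrangement_natCast_add {j : ℕ} (hj : j < d + 1) :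
    blockArrangement e ((d + 1 : ℕ) + j) = e (.inr ⟨j, hj⟩) := by
  rw [blockArrangement, ← finSumFinEquiv_symm_apply_natAdd]
  congr 2
  ext
  simp only [← Nat.cast_add, Fin.val_natAdd]
  exact ZMod.val_cast_of_lt (by omega)

theorem cycWindow_blockArrangement_zero [DecidableEq V] :
    cycWindow d (blockArrangement e) 0 = Finset.univ.image (e ∘ .inl) := by
  ext v
  simp only [mem_cycWindow, zero_add, Finset.mem_image, Finset.mem_univ, true_and,
    Function.comp_apply]
  constructor
  · rintro ⟨j, hj, rfl⟩
    exact ⟨⟨j, hj⟩, (blockArrangement_natCast e hj).symm⟩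
  · rintro ⟨k, rfl⟩
    exact ⟨k, k.isLt, blockArrangement_natCast e k.isLt⟩

theorem cycWindow_blockArrangement_natCast_succ [DecidableEq V] :
    cycWindow d (blockArrangement e) ((d + 1 : ℕ) : ZMod _) = Finset.univ.image (e ∘ .inr) := by
  ext v
  simp only [mem_cycWindow, Finset.mem_image, Finset.mem_univ, true_and, Function.comp_apply]
  constructor
  · rintro ⟨j, hj, rfl⟩
    exact ⟨⟨j, hj⟩, (blockArrangement_natCast_add e hj).symm⟩
  · rintro ⟨k, rfl⟩
    exact ⟨k, k.isLt, blockArrangement_natCast_add e k.isLt⟩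

end BlockArrangement

theorem exists_sumEquiv_image_inl_eq_and_image_inr_eq_compl [Fintype V] [DecidableEq V]
    {d : ℕ} (A : Finset V) (hA : A.card = d + 1) (hV : Fintype.card V = (d + 1) + (d + 1)) :
    ∃ e : Fin (d + 1) ⊕ Fin (d + 1) ≃ V,
      Finset.univ.image (e ∘ .inl) = A ∧ Finset.univ.image (e ∘ .inr) = Aᶜ := by
  have hin : Fintype.card {v // v ∈ A} = d + 1 := by simpa using hA
  have hout : Fintype.card {v // v ∉ A} = d + 1 := by
    rw [Fintype.card_subtype_compl, hV, hin]; omega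
  refine ⟨((Fintype.equivFinOfCardEq hin).sumCongr (Fintype.equivFinOfCardEq hout)).symm.trans
      (Equiv.sumCompl (· ∈ A)), ?_, ?_⟩ <;> ext v <;>
    simp only [Finset.mem_image, Finset.mem_univ, true_and, Function.comp_apply,
      Equiv.trans_apply, Equiv.sumCongr_symm, Equiv.sumCongr_apply, Sum.map_inl, Sum.map_inr,
      Equiv.sumCompl_apply_inl, Equiv.sumCompl_apply_inr, Finset.mem_compl]
  · exact ⟨fun ⟨a, ha⟩ => ha ▸ (_ : A).2, fun hv => ⟨_, congrArg Subtype.val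
      ((Fintype.equivFinOfCardEq hin).symm_apply_apply ⟨v, hv⟩)⟩⟩
  · exact ⟨fun ⟨a, ha⟩ => ha ▸ (_ : {v // v ∉ A}).2, fun hv => ⟨_, congrArg Subtype.val
      ((Fintype.equivFinOfCardEq hout).symm_apply_apply ⟨v, hv⟩)⟩⟩

theorem exists_isWeakHamiltonianCycle_of_isFacet_compl [Fintype V] [DecidableEq V] {d : ℕ}
    {IsFacet : Finset V → Prop} (A : Finset V) (hA : A.card = d + 1)
    (hV : Fintype.card V = (d + 1) + (d + 1)) (hAf : IsFacet A) (hAcf : IsFacet Aᶜ) :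
    ∃ f : ZMod ((d + 1) + (d + 1)) → V, IsWeakHamiltonianCycle IsFacet d f := by
  obtain ⟨e, hinl, hinr⟩ := exists_sumEquiv_image_inl_eq_and_image_inr_eq_compl A hA hV
  have h₀ := (cycWindow_blockArrangement_zero e).trans hinl
  have h₁ := (cycWindow_blockArrangement_natCast_succ e).trans hinr
  refine ⟨blockArrangement e, bijective_blockArrangement e, fun v => ?_⟩
  by_cases hv : v ∈ A
  · exact ⟨0, h₀ ▸ hAf, h₀ ▸ hv⟩
  · exact ⟨_, h₁ ▸ hAcf, h₁ ▸ Finset.mem_compl.2 hv⟩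

/-- For every 3-element subset `F` of `{0,...,5}` with `0 ∉ F` (so `F` is not a facet of
`D_2`), the complex `D_2 ∪ {F}` admits a weak Hamiltonian cycle: there is a bijection
`f : ZMod 6 → {0,...,5}` such that every vertex lies in some window that is a facet of
`D_2 ∪ {F}`. -/
theorem D2_plus_triangle_weakly_hamiltonian (F : Finset (Fin 6))
    (hFcard : F.card = 3) (hF0 : (0 : Fin 6) ∉ F) :
    ∃ f : ZMod 6 → Fin 6, Function.Bijective f ∧
      ∀ v : Fin 6, ∃ i : ZMod 6,
        (isFacetD2 (cycWindow 2 f i) ∨ cycWindow 2 f i = F) ∧ v ∈ cycWindow 2 f i := by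
  have hFc : Fᶜ.card = 3 := by rw [Finset.card_compl, hFcard]; rfl
  exact exists_isWeakHamiltonianCycle_of_isFacet_compl (d := 2)
    (IsFacet := fun W => isFacetD2 W ∨ W = F) F hFcard rfl (Or.inr rfl)
    (Or.inl ⟨hFc, Finset.mem_compl.2 hF0⟩)
end

section
/- For every integer d ≥ 2, the dual graph G_d of the complex C_d has no Hamiltonian cycle. -/
instance (d : ℕ) : NeZero (d + 12) := ⟨by omega⟩

/-- The natural labeling of the vertex set `{1,...,n}` (with `n = d + 12`) by `ZMod n`:
each residue is sent to its representative in `{1,...,n}`. -/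
def repC (d : ℕ) (x : ZMod (d + 12)) : ℕ :=
  if x = 0 then d + 12 else x.val

/-- The facet `H_i = {i, i+1, ..., i+d}` of `C_d`, with entries reduced mod `n = d + 12`
to representatives in `{1,...,n}`. -/
def Hface (d : ℕ) (i : ℕ) : Finset ℕ :=
  (Finset.range (d + 1)).image (fun (j : ℕ) => repC d ((i : ZMod (d + 12)) + (j : ZMod (d + 12))))

def Fone (d : ℕ) : Finset ℕ := insert 1 (insert 5 (Finset.Icc 7 (d + 5)))
def Ftwo (d : ℕ) : Finset ℕ := insert 1 (insert (d + 7) (Finset.Icc 7 (d + 5)))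
def Fthree (d : ℕ) : Finset ℕ := insert 2 (insert 8 (Finset.Icc 10 (d + 8)))
def Ffour (d : ℕ) : Finset ℕ := insert 2 (insert (d + 10) (Finset.Icc 10 (d + 8)))

/-- The facets of the pure `d`-complex `C_d` on vertex set `{1,...,d+12}`:
the faces `H_1, ..., H_n` together with `F_1, F_2, F_3, F_4`. -/
def facetsC (d : ℕ) : Finset (Finset ℕ) :=
  (Finset.Icc 1 (d + 12)).image (Hface d) ∪ {Fone d, Ftwo d, Fthree d, Ffour d}

/-- The dual graph `G_d` of `C_d`: vertices are the facets of `C_d`, two facets being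
adjacent iff their intersection has exactly `d` elements. -/
def dualGraphC (d : ℕ) : SimpleGraph {F : Finset ℕ // F ∈ facetsC d} where
  Adj A B := A ≠ B ∧ ((A : Finset ℕ) ∩ (B : Finset ℕ)).card = d
  symm := by
    constructor
    intro A B h
    exact ⟨h.1.symm, by rw [Finset.inter_comm]; exact h.2⟩
  loopless := by
    constructor
    intro A h
    exact h.1 rfl

/-!
The facets `H₆`, `F₁`, `F₂` have exactly two neighbours in `G_d`, namely `{H₅, H₇}`, `{F₂, H₅}`
and `{F₁, H₇}`. A Hamiltonian cycle uses both edges at a vertex of degree two, so it contains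
`H₅H₆`, `H₆H₇`, `F₁F₂`, `F₁H₅` and `F₂H₇`. These are already two cycle edges at each of `H₅` and
`H₇`, so the cycle closes up on the five facets `F₁, F₂, H₅, H₆, H₇` and never reaches `F₃`.
-/

namespace SimpleGraph.Walk

variable {V : Type*} {G : SimpleGraph V} {u v w a b : V}

theorem mem_iff_of_mem_support {S : Set V} (p : G.Walk u v)
    (hS : ∀ x y, s(x, y) ∈ p.edges → x ∈ S → y ∈ S) (hw : w ∈ p.support) : w ∈ S ↔ u ∈ S := by
  induction p with
  | nil => rw [support_nil, List.mem_singleton] at hw; rw [hw]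
  | @cons u x v h q ih =>
    rw [support_cons, List.mem_cons] at hw
    rcases hw with rfl | hw
    · rfl
    have hux : s(u, x) ∈ (cons h q).edges := by simp
    rw [ih (fun y z hyz => hS y z (by simp [hyz])) hw]
    exact ⟨hS x u (Sym2.eq_swap ▸ hux), hS u x hux⟩

theorem IsCycle.neighborSet_toSubgraph_eq_pair_of_subset {p : G.Walk u u} (hp : p.IsCycle)
    (hv : v ∈ p.support) (h : G.neighborSet v ⊆ {a, b}) :
    p.toSubgraph.neighborSet v = {a, b} :=
  Set.eq_of_subset_of_ncard_le ((p.toSubgraph.neighborSet_subset v).trans h)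
    ((Set.ncard_insert_le a {b}).trans
      (by rw [Set.ncard_singleton, hp.ncard_neighborSet_toSubgraph_eq_two hv]))

theorem IsCycle.neighborSet_toSubgraph_eq_pair_of_adj {p : G.Walk u u} (hp : p.IsCycle)
    (hv : v ∈ p.support) (hab : a ≠ b) (ha : p.toSubgraph.Adj v a) (hb : p.toSubgraph.Adj v b) :
    p.toSubgraph.neighborSet v = {a, b} :=
  (Set.eq_of_subset_of_ncard_le (Set.pair_subset ha hb)
    ((hp.ncard_neighborSet_toSubgraph_eq_two hv).trans (Set.ncard_pair hab).symm).le
    p.finite_neighborSet_toSubgraph).symm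

theorem IsHamiltonianCycle.mem_of_neighborSet_toSubgraph_subset [DecidableEq V] {p : G.Walk u u}
    (hp : p.IsHamiltonianCycle) {S : Set V} (hS : ∀ x ∈ S, p.toSubgraph.neighborSet x ⊆ S)
    (ha : a ∈ S) (b : V) : b ∈ S :=
  have hp' := fun w => p.mem_iff_of_mem_support
    (fun x _ hxy hx => hS x hx (adj_toSubgraph_iff_mem_edges.mpr hxy)) (hp.mem_support w)
  (hp' b).mpr ((hp' a).mp ha)

end SimpleGraph.Walk

theorem Finset.card_le_sum_of_forall_exists_mem_Icc {s : Finset ℕ} (L : List (ℕ × ℕ))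
    (h : ∀ x ∈ s, ∃ I ∈ L, I.1 ≤ x ∧ x ≤ I.2) : s.card ≤ (L.map fun I => I.2 + 1 - I.1).sum := by
  induction L generalizing s with
  | nil => simp_all [Finset.eq_empty_iff_forall_notMem]
  | cons I L ih =>
    have hsdiff : (s \ Finset.Icc I.1 I.2).card ≤ (L.map fun I => I.2 + 1 - I.1).sum := by
      refine ih fun x hx => ?_
      rw [Finset.mem_sdiff, Finset.mem_Icc] at hx
      obtain ⟨J, hJ, hxJ⟩ := h x hx.1
      rcases List.mem_cons.1 hJ with rfl | hJ
      exacts [absurd hxJ hx.2, ⟨J, hJ, hxJ⟩]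
    rw [← Finset.card_inter_add_card_sdiff s (Finset.Icc I.1 I.2), List.map_cons, List.sum_cons,
      ← Nat.card_Icc]
    gcongr
    exact Finset.inter_subset_right

theorem Finset.card_ne_of_forall_exists_mem_Icc {s : Finset ℕ} {k : ℕ} (L : List (ℕ × ℕ))
    (h : ∀ x ∈ s, ∃ I ∈ L, I.1 ≤ x ∧ x ≤ I.2) (hL : (L.map fun I => I.2 + 1 - I.1).sum < k) :
    s.card ≠ k :=
  ((card_le_sum_of_forall_exists_mem_Icc L h).trans_lt hL).ne

theorem repC_natCast {d m : ℕ} (h1 : 1 ≤ m) (h2 : m ≤ 2 * (d + 12)) :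
    repC d m = if m ≤ d + 12 then m else m - (d + 12) := by
  simp only [repC, ZMod.natCast_eq_zero_iff, ZMod.val_natCast, Nat.dvd_iff_mod_eq_zero]
  have hdiv := Nat.div_add_mod m (d + 12)
  have hmod := Nat.mod_lt m (show d + 12 > 0 by omega)
  have hq : m / (d + 12) ≤ 2 := Nat.div_le_of_le_mul (by omega)
  generalize m / (d + 12) = q at *
  interval_cases q <;> split_ifs <;> omega

theorem mem_Hface {d i x : ℕ} (h1 : 1 ≤ i) (h2 : i ≤ d + 12) :
    x ∈ Hface d i ↔ i ≤ x ∧ x ≤ i + d ∧ x ≤ d + 12 ∨ 1 ≤ x ∧ x + 12 ≤ i := by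
  simp only [Hface, Finset.mem_image, Finset.mem_range, ← Nat.cast_add]
  constructor
  · rintro ⟨j, hj, rfl⟩
    rw [repC_natCast (by omega) (by omega)]
    split_ifs <;> omega
  · intro hx
    refine ⟨if i ≤ x then x - i else x + (d + 12) - i, by split_ifs <;> omega, ?_⟩
    rw [repC_natCast (by split_ifs <;> omega) (by split_ifs <;> omega)]
    split_ifs <;> omega

theorem Hface_eq_Icc {d i : ℕ} (h1 : 1 ≤ i) (h2 : i ≤ 12) : Hface d i = Finset.Icc i (i + d) := by
  ext x
  rw [mem_Hface h1 (by omega), Finset.mem_Icc]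
  omega

theorem mem_facetsC {d : ℕ} {B : Finset ℕ} :
    B ∈ facetsC d ↔ (∃ i, (1 ≤ i ∧ i ≤ d + 12) ∧ Hface d i = B) ∨
      B = Fone d ∨ B = Ftwo d ∨ B = Fthree d ∨ B = Ffour d := by
  simp only [facetsC, Finset.mem_union, Finset.mem_image, Finset.mem_Icc, Finset.mem_insert,
    Finset.mem_singleton]

section

open Finset

/- Each non-neighbour `B` is excluded by covering the intersection with explicit intervals of
total length less than `d`. -/

theorem eq_of_card_Hface_six_inter {d : ℕ} (hd : 2 ≤ d) {B : Finset ℕ}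
    (hB : B ∈ facetsC d) (hne : B ≠ Hface d 6) (hcard : (Hface d 6 ∩ B).card = d) :
    B = Hface d 5 ∨ B = Hface d 7 := by
  have h6 : Hface d 6 = Finset.Icc 6 (6 + d) := Hface_eq_Icc (by norm_num) (by norm_num)
  rcases mem_facetsC.1 hB with ⟨i, ⟨hi1, hi2⟩, rfl⟩ | rfl | rfl | rfl | rfl
  · obtain rfl | rfl | rfl | hi : i = 5 ∨ i = 6 ∨ i = 7 ∨ (i ≠ 5 ∧ i ≠ 6 ∧ i ≠ 7) := by omega
    · exact .inl rfl
    · exact absurd rfl hne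
    · exact .inr rfl
    exact absurd hcard <| card_ne_of_forall_exists_mem_Icc
      [(max 6 i, min (d + 6) (i + d)), (6, i - 12)]
      (fun x hx => by simp [h6, mem_Hface hi1 hi2] at hx ⊢; omega) (by simp; omega)
  · exact absurd hcard <| card_ne_of_forall_exists_mem_Icc [(7, d + 5)]
      (fun x hx => by simp [h6, Fone] at hx ⊢; omega) (by simp; omega)
  · exact absurd hcard <| card_ne_of_forall_exists_mem_Icc [(7, d + 5)]
      (fun x hx => by simp [h6, Ftwo] at hx ⊢; omega) (by simp; omega)
  · exact absurd hcard <| card_ne_of_forall_exists_mem_Icc [(8, 8), (10, d + 6)]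
      (fun x hx => by simp [h6, Fthree] at hx ⊢; omega) (by simp; omega)
  · exact absurd hcard <| card_ne_of_forall_exists_mem_Icc [(10, d + 6)]
      (fun x hx => by simp [h6, Ffour] at hx ⊢; omega) (by simp; omega)

theorem eq_of_card_Fone_inter {d : ℕ} (hd : 2 ≤ d) {B : Finset ℕ}
    (hB : B ∈ facetsC d) (hne : B ≠ Fone d) (hcard : (Fone d ∩ B).card = d) :
    B = Ftwo d ∨ B = Hface d 5 := by
  rcases mem_facetsC.1 hB with ⟨i, ⟨hi1, hi2⟩, rfl⟩ | rfl | rfl | rfl | rfl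
  · obtain rfl | rfl | hi | hi | hi :
        i = 5 ∨ i = 1 ∨ (2 ≤ i ∧ i ≤ 4) ∨ (6 ≤ i ∧ i ≤ 12) ∨ 13 ≤ i := by omega
    · exact .inr rfl
    · exact absurd hcard <| card_ne_of_forall_exists_mem_Icc [(1, 1), (5, d + 1)]
        (fun x hx => by simp [Fone, mem_Hface hi1 hi2] at hx ⊢; omega) (by simp; omega)
    · exact absurd hcard <| card_ne_of_forall_exists_mem_Icc [(5, 5), (7, i + d)]
        (fun x hx => by simp [Fone, mem_Hface hi1 hi2] at hx ⊢; omega) (by simp; omega)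
    · exact absurd hcard <| card_ne_of_forall_exists_mem_Icc [(max 7 i, d + 5)]
        (fun x hx => by simp [Fone, mem_Hface hi1 hi2] at hx ⊢; omega) (by simp; omega)
    · exact absurd hcard <| card_ne_of_forall_exists_mem_Icc [(1, 1), (5, i - 12), (i, d + 5)]
        (fun x hx => by simp [Fone, mem_Hface hi1 hi2] at hx ⊢; omega) (by simp; omega)
  · exact absurd rfl hne
  · exact .inl rfl
  · exact absurd hcard <| card_ne_of_forall_exists_mem_Icc [(8, 8), (10, d + 5)]
      (fun x hx => by simp [Fone, Fthree] at hx ⊢; omega) (by simp; omega)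
  · exact absurd hcard <| card_ne_of_forall_exists_mem_Icc [(10, d + 5)]
      (fun x hx => by simp [Fone, Ffour] at hx ⊢; omega) (by simp; omega)

theorem eq_of_card_Ftwo_inter {d : ℕ} (hd : 2 ≤ d) {B : Finset ℕ}
    (hB : B ∈ facetsC d) (hne : B ≠ Ftwo d) (hcard : (Ftwo d ∩ B).card = d) :
    B = Fone d ∨ B = Hface d 7 := by
  rcases mem_facetsC.1 hB with ⟨i, ⟨hi1, hi2⟩, rfl⟩ | rfl | rfl | rfl | rfl
  · obtain rfl | rfl | hi | hi | hi :
        i = 7 ∨ i = 1 ∨ (2 ≤ i ∧ i ≤ 6) ∨ (8 ≤ i ∧ i ≤ 12) ∨ 13 ≤ i := by omega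
    · exact .inr rfl
    · exact absurd hcard <| card_ne_of_forall_exists_mem_Icc [(1, 1), (7, d + 1)]
        (fun x hx => by simp [Ftwo, mem_Hface hi1 hi2] at hx ⊢; omega) (by simp; omega)
    · exact absurd hcard <| card_ne_of_forall_exists_mem_Icc [(7, d + 5)]
        (fun x hx => by simp [Ftwo, mem_Hface hi1 hi2] at hx ⊢; omega) (by simp; omega)
    · exact absurd hcard <| card_ne_of_forall_exists_mem_Icc [(i, d + 5), (d + 7, d + 7)]
        (fun x hx => by simp [Ftwo, mem_Hface hi1 hi2] at hx ⊢; omega) (by simp; omega)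
    · exact absurd hcard <| card_ne_of_forall_exists_mem_Icc [(1, 1), (7, i - 12), (i, d + 7)]
        (fun x hx => by simp [Ftwo, mem_Hface hi1 hi2] at hx ⊢; omega) (by simp; omega)
  · exact .inl rfl
  · exact absurd rfl hne
  · exact absurd hcard <| card_ne_of_forall_exists_mem_Icc [(8, d + 5), (d + 7, d + 7)]
      (fun x hx => by simp [Ftwo, Fthree] at hx ⊢; omega) (by simp; omega)
  · exact absurd hcard <| card_ne_of_forall_exists_mem_Icc [(10, d + 5), (d + 7, d + 7)]
      (fun x hx => by simp [Ftwo, Ffour] at hx ⊢; omega) (by simp; omega)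

end

theorem Hface_mem_facetsC {d i : ℕ} (h1 : 1 ≤ i) (h2 : i ≤ d + 12) : Hface d i ∈ facetsC d :=
  mem_facetsC.2 (.inl ⟨i, ⟨h1, h2⟩, rfl⟩)

theorem dualGraphC_neighborSet_subset {d : ℕ} {X a b : {F : Finset ℕ // F ∈ facetsC d}}
    (h : ∀ {B}, B ∈ facetsC d → B ≠ X.1 → (X.1 ∩ B).card = d → B = a.1 ∨ B = b.1) :
    (dualGraphC d).neighborSet X ⊆ {a, b} := by
  rintro ⟨B, hB⟩ ⟨hne, hcard⟩
  rcases h hB (fun hBX => hne (Subtype.ext hBX.symm)) hcard with hBa | hBb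
  exacts [.inl (Subtype.ext hBa), .inr (Subtype.ext hBb)]

namespace Cd

variable (d : ℕ)

def H5 : {F : Finset ℕ // F ∈ facetsC d} := ⟨Hface d 5, Hface_mem_facetsC (by norm_num) (by omega)⟩
def H6 : {F : Finset ℕ // F ∈ facetsC d} := ⟨Hface d 6, Hface_mem_facetsC (by norm_num) (by omega)⟩
def H7 : {F : Finset ℕ // F ∈ facetsC d} := ⟨Hface d 7, Hface_mem_facetsC (by norm_num) (by omega)⟩
def F1 : {F : Finset ℕ // F ∈ facetsC d} := ⟨Fone d, mem_facetsC.2 (by simp)⟩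
def F2 : {F : Finset ℕ // F ∈ facetsC d} := ⟨Ftwo d, mem_facetsC.2 (by simp)⟩
def F3 : {F : Finset ℕ // F ∈ facetsC d} := ⟨Fthree d, mem_facetsC.2 (by simp)⟩

def pentagon : Set {F : Finset ℕ // F ∈ facetsC d} := {F1 d, F2 d, H5 d, H6 d, H7 d}

theorem neighborSet_H6_subset (hd : 2 ≤ d) : (dualGraphC d).neighborSet (H6 d) ⊆ {H5 d, H7 d} :=
  dualGraphC_neighborSet_subset (eq_of_card_Hface_six_inter hd)

theorem neighborSet_F1_subset (hd : 2 ≤ d) : (dualGraphC d).neighborSet (F1 d) ⊆ {F2 d, H5 d} :=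
  dualGraphC_neighborSet_subset (eq_of_card_Fone_inter hd)

theorem neighborSet_F2_subset (hd : 2 ≤ d) : (dualGraphC d).neighborSet (F2 d) ⊆ {F1 d, H7 d} :=
  dualGraphC_neighborSet_subset (eq_of_card_Ftwo_inter hd)

theorem H6_ne_F1 : H6 d ≠ F1 d := fun h =>
  ne_of_mem_of_not_mem' (a := 6) (by simp [H6, Hface_eq_Icc]) (by simp [F1, Fone])
    (congrArg (·.1) h)

theorem H6_ne_F2 : H6 d ≠ F2 d := fun h =>
  ne_of_mem_of_not_mem' (a := 6) (by simp [H6, Hface_eq_Icc]) (by simp [F2, Ftwo])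
    (congrArg (·.1) h)

theorem F3_notMem_pentagon : F3 d ∉ pentagon d := by
  have h2 : ∀ v ∈ pentagon d, 2 ∉ v.1 := by
    rintro v (rfl | rfl | rfl | rfl | rfl) <;> simp [F1, F2, H5, H6, H7, Fone, Ftwo, Hface_eq_Icc]
  exact fun hF3 => h2 _ hF3 (by simp [F3, Fthree])

end Cd

open SimpleGraph Cd

/-- For every `d ≥ 2`, the dual graph `G_d` of `C_d` has no Hamiltonian cycle. -/
theorem Cd_dual_not_hamiltonian (d : ℕ) (hd : 2 ≤ d) :
    ¬ ∃ (A : {F : Finset ℕ // F ∈ facetsC d}) (p : (dualGraphC d).Walk A A),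
      p.IsHamiltonianCycle := by
  rintro ⟨A, p, hp⟩
  have hc := hp.isCycle
  have N6 := hc.neighborSet_toSubgraph_eq_pair_of_subset (hp.mem_support _)
    (neighborSet_H6_subset d hd)
  have N1 := hc.neighborSet_toSubgraph_eq_pair_of_subset (hp.mem_support _)
    (neighborSet_F1_subset d hd)
  have N2 := hc.neighborSet_toSubgraph_eq_pair_of_subset (hp.mem_support _)
    (neighborSet_F2_subset d hd)
  have N5 : p.toSubgraph.neighborSet (H5 d) = {H6 d, F1 d} :=
    hc.neighborSet_toSubgraph_eq_pair_of_adj (hp.mem_support _) (H6_ne_F1 d)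
      (Subgraph.adj_symm _ (by simp [← Subgraph.mem_neighborSet, N6]))
      (Subgraph.adj_symm _ (by simp [← Subgraph.mem_neighborSet, N1]))
  have N7 : p.toSubgraph.neighborSet (H7 d) = {H6 d, F2 d} :=
    hc.neighborSet_toSubgraph_eq_pair_of_adj (hp.mem_support _) (H6_ne_F2 d)
      (Subgraph.adj_symm _ (by simp [← Subgraph.mem_neighborSet, N6]))
      (Subgraph.adj_symm _ (by simp [← Subgraph.mem_neighborSet, N2]))
  have hclosed : ∀ x ∈ pentagon d, p.toSubgraph.neighborSet x ⊆ pentagon d := by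
    rintro x (rfl | rfl | rfl | rfl | rfl) <;>
      simp [pentagon, N1, N2, N5, N6, N7, Set.insert_subset_iff]
  exact F3_notMem_pentagon d
    (hp.mem_of_neighborSet_toSubgraph_subset hclosed (Set.mem_insert (F1 d) _) (F3 d))
end

section
/- The complex K is 2-strongly connected: K is strongly connected, and for every vertex v of K, the pure 2-complex whose facets are the facets of K not containing v is strongly connected. -/
/-! Each dual graph is finite, so its connectivity is a finite computation: breadth-first search
from a root facet avoiding the deleted vertex (`{2, 4, 12}` or `{7, 8, 10}`) reaches every facet
within six rounds, and `decide` checks this in the kernel. -/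

/-- The facets of the 2-complex `K` on vertex set `{1,...,13}`. -/
def facetsK : Finset (Finset ℕ) :=
  {{2, 4, 12}, {1, 2, 4}, {1, 2, 12}, {1, 4, 12}, {2, 4, 13}, {2, 3, 13}, {3, 12, 13},
   {2, 3, 12}, {4, 5, 9}, {4, 9, 13}, {9, 10, 13}, {10, 12, 13}, {10, 11, 12},
   {4, 11, 12}, {4, 5, 11}, {5, 6, 9}, {6, 7, 9}, {7, 8, 10}, {7, 8, 11}, {5, 6, 7},
   {5, 7, 11}, {7, 9, 10}, {8, 10, 11}}

/-- The dual graph of a pure `d`-complex given by its facet set `Fs`: vertices are the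
facets, two facets being adjacent iff their intersection has exactly `d` elements. -/
def dualGraph (d : ℕ) (Fs : Finset (Finset ℕ)) : SimpleGraph {F : Finset ℕ // F ∈ Fs} where
  Adj A B := A ≠ B ∧ ((A : Finset ℕ) ∩ (B : Finset ℕ)).card = d
  symm := by
    constructor
    intro A B h
    exact ⟨h.1.symm, by rw [Finset.inter_comm]; exact h.2⟩
  loopless := by
    constructor
    intro A h
    exact h.1 rfl

instance dualGraph.instDecidableRelAdj (d : ℕ) (Fs : Finset (Finset ℕ)) :
    DecidableRel (dualGraph d Fs).Adj :=
  fun A B => inferInstanceAs (Decidable (A ≠ B ∧ ((A : Finset ℕ) ∩ (B : Finset ℕ)).card = d))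

namespace SimpleGraph

variable {V : Type*} [Fintype V] [DecidableEq V] (G : SimpleGraph V) [DecidableRel G.Adj]

def expand (s : Finset V) : Finset V :=
  s ∪ Finset.univ.filter fun v => ∃ u ∈ s, G.Adj u v

theorem reachable_of_mem_iterate_expand {r v : V} (n : ℕ) (hv : v ∈ G.expand^[n] {r}) :
    G.Reachable r v := by
  induction n generalizing v with
  | zero =>
    rw [Function.iterate_zero_apply, Finset.mem_singleton] at hv
    exact hv ▸ Reachable.refl v
  | succ n ih =>
    rw [Function.iterate_succ_apply', expand, Finset.mem_union, Finset.mem_filter] at hv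
    rcases hv with hv | ⟨-, u, hu, huv⟩
    · exact ih hv
    · exact (ih hu).trans huv.reachable

theorem connected_of_iterate_expand_eq_univ (r : V) (n : ℕ)
    (h : G.expand^[n] {r} = Finset.univ) : G.Connected :=
  (connected_iff_exists_forall_reachable G).2
    ⟨r, fun v => G.reachable_of_mem_iterate_expand n (h ▸ Finset.mem_univ v)⟩

end SimpleGraph

/-- The complex `K` is 2-strongly connected: `K` is strongly connected (its dual graph is
connected), and for every vertex `v` of `K`, the pure 2-complex whose facets are the
facets of `K` not containing `v` is strongly connected. -/
theorem K_two_strongly_connected :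
    (dualGraph 2 facetsK).Connected ∧
    ∀ v ∈ Finset.Icc 1 13,
      (dualGraph 2 (facetsK.filter (fun F => v ∉ F))).Connected := by
  refine ⟨(dualGraph 2 facetsK).connected_of_iterate_expand_eq_univ ⟨{2, 4, 12}, by decide⟩ 6
    (by decide), fun v hv => ?_⟩
  obtain ⟨hv1, hv13⟩ := Finset.mem_Icc.1 hv
  interval_cases v <;>
    first
      | exact SimpleGraph.connected_of_iterate_expand_eq_univ _ ⟨{2, 4, 12}, by decide⟩ 6 (by decide)
      | exact SimpleGraph.connected_of_iterate_expand_eq_univ _ ⟨{7, 8, 10}, by decide⟩ 6 (by decide)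
end
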